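/- arXiv:1807.02439 — 2 statements merged into one kernel-verified Lean document; each statement's English description precedes it below -/
import Mathlib

section
/- Let G be a group, ψ : G → Isom(ℍ²) a group homomorphism whose associated action of G on ℍ² is properly discontinuous (for every pair of compact sets K, L ⊆ ℍ², the set of g ∈ G with ψ(g)·K ∩ L ≠ ∅ is finite), and τ : G → (ℝ, +) a group homomorphism. Then the skewed action of G × ℤ on ℍ² × ℝ given by (g, n) · (x, y) = (ψ(g)·x, y + τ(g) + n) is properly discontinuous: for every pair of compact sets K, L ⊆ ℍ² × ℝ, the set of (g, n) ∈ G × ℤ with ((g, n) · K) ∩ L ≠ ∅ is finite. -/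
/-! If `(g, n)` moves a point of `K` into `L`, then `g` moves a point of `pr₁ K` into `pr₁ L`,
so `g` lies in a finite set `S`; and `n` lies in the compact set `pr₂ L - (pr₂ K + τ S)`,
which contains only finitely many integers. -/

open Pointwise Set

theorem Int.finite_setOf_cast_mem {B : Set ℝ} (hB : IsCompact B) : {n : ℤ | (n : ℝ) ∈ B}.Finite :=
  (Int.isClosedEmbedding_coe_real.isCompact_preimage hB).finite_of_discrete

theorem finite_setOf_skew_image_inter_nonempty {G X Y : Type*} [TopologicalSpace X]
    [TopologicalSpace Y] (f : G → X → Y)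
    (hf : ∀ K L, IsCompact K → IsCompact L → {g | (f g '' K ∩ L).Nonempty}.Finite) (t : G → ℝ)
    {K : Set (X × ℝ)} {L : Set (Y × ℝ)} (hK : IsCompact K) (hL : IsCompact L) :
    {p : G × ℤ | ((fun q : X × ℝ => (f p.1 q.1, q.2 + t p.1 + p.2)) '' K ∩ L).Nonempty}.Finite := by
  set S := {g | (f g '' (Prod.fst '' K) ∩ Prod.fst '' L).Nonempty}
  have hS : S.Finite := hf _ _ (hK.image continuous_fst) (hL.image continuous_fst)
  have hB : IsCompact (Prod.snd '' L + -(Prod.snd '' K + t '' S)) :=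
    (hL.image continuous_snd).add ((hK.image continuous_snd).add (hS.image t).isCompact).neg
  refine (hS.prod (Int.finite_setOf_cast_mem hB)).subset ?_
  rintro ⟨g, n⟩ ⟨_, ⟨k, hk, rfl⟩, hkL⟩
  have hg : g ∈ S :=
    ⟨_, mem_image_of_mem _ (mem_image_of_mem _ hk), mem_image_of_mem Prod.fst hkL⟩
  refine ⟨hg, ?_⟩
  have hn : (n : ℝ) = (k.2 + t g + n) + -(k.2 + t g) := by ring
  change (n : ℝ) ∈ Prod.snd '' L + -(Prod.snd '' K + t '' S)
  rw [hn]
  exact add_mem_add (mem_image_of_mem Prod.snd hkL)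
    (neg_mem_neg.mpr (add_mem_add (mem_image_of_mem _ hk) (mem_image_of_mem _ hg)))

theorem skewed_action_properly_discontinuous_general (G : Type*) [Group G]
    (ψ : G →* (UpperHalfPlane ≃ᵢ UpperHalfPlane))
    (hpd : ∀ K L : Set UpperHalfPlane, IsCompact K → IsCompact L →
      {g : G | ((fun x => ψ g x) '' K ∩ L).Nonempty}.Finite)
    (τ : G → ℝ) :
    ∀ K L : Set (UpperHalfPlane × ℝ), IsCompact K → IsCompact L →
      {p : G × ℤ |
        ((fun q : UpperHalfPlane × ℝ => ((ψ p.1 q.1, q.2 + τ p.1 + p.2) : UpperHalfPlane × ℝ)) '' K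
          ∩ L).Nonempty}.Finite := fun _ _ hK hL =>
  finite_setOf_skew_image_inter_nonempty (fun g x => ψ g x) hpd τ hK hL

/-- If the action of `G` on `ℍ²` via `ψ : G → Isom(ℍ²)` is properly discontinuous (for
all compact `K, L ⊆ ℍ²` only finitely many `g ∈ G` satisfy `ψ(g)K ∩ L ≠ ∅`) and
`τ : G → (ℝ, +)` is a homomorphism, then the skewed action
`(g, n) · (x, y) = (ψ(g)·x, y + τ(g) + n)` of `G × ℤ` on `ℍ² × ℝ` is properly
discontinuous. -/
theorem skewed_action_properly_discontinuous (G : Type*) [Group G]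
    (ψ : G →* (UpperHalfPlane ≃ᵢ UpperHalfPlane))
    (hpd : ∀ K L : Set UpperHalfPlane, IsCompact K → IsCompact L →
      {g : G | ((fun x => ψ g x) '' K ∩ L).Nonempty}.Finite)
    (τ : G → ℝ) (hτ : ∀ g h : G, τ (g * h) = τ g + τ h) :
    ∀ K L : Set (UpperHalfPlane × ℝ), IsCompact K → IsCompact L →
      {p : G × ℤ |
        ((fun q : UpperHalfPlane × ℝ => ((ψ p.1 q.1, q.2 + τ p.1 + p.2) : UpperHalfPlane × ℝ)) '' K
          ∩ L).Nonempty}.Finite :=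
  skewed_action_properly_discontinuous_general G ψ hpd τ
end

section
/- The amalgamated free product of FreeGroup(Fin 3) × ℤ and ℤ × ℤ over ℤ — i.e., the pushout of the diagram (FreeGroup(Fin 3) × ℤ) ← ℤ → (ℤ × ℤ) where ℤ maps to the second coordinate factor of FreeGroup(Fin 3) × ℤ and to the first coordinate factor of ℤ × ℤ — is isomorphic to FreeGroup(Fin 4) × ℤ. -/
/-- The two-element family consisting of `G₁` (at `true`) and `G₂` (at `false`). -/
def BoolFam (G₁ G₂ : Type) : Bool → Type
  | true => G₁
  | false => G₂

instance {G₁ G₂ : Type} [Group G₁] [Group G₂] : ∀ b, Group (BoolFam G₁ G₂ b)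
  | true => ‹Group G₁›
  | false => ‹Group G₂›

/-- The pair of maps `f₁ : H →* G₁`, `f₂ : H →* G₂`, packaged as a family over `Bool`;
`Monoid.PushoutI (boolPhi f₁ f₂)` is then the pushout (amalgamated free product) of the
diagram `G₁ ← H → G₂`. -/
def boolPhi {H G₁ G₂ : Type} [Group H] [Group G₁] [Group G₂]
    (f₁ : H →* G₁) (f₂ : H →* G₂) : ∀ b, H →* BoolFam G₁ G₂ b
  | true => f₁
  | false => f₂

/-!
In the pushout of `A × C ← C → C × B` the common copy of `C` commutes with `A` and with `B`,
and these are the only relations besides those of `A`, `B`, `C`; so the pushout is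
`(A ∗ B) × C`. For `A = F₃` and `B = C = ℤ = F₁` this is `(F₃ ∗ F₁) × ℤ = F₄ × ℤ`.
-/

open scoped Monoid.Coprod

namespace Monoid.PushoutI

section Binary

variable {H G₁ G₂ K : Type} [Group H] [Group G₁] [Group G₂] [Group K]
  {φ₁ : H →* G₁} {φ₂ : H →* G₂}

abbrev ofLeft : G₁ →* PushoutI (boolPhi φ₁ φ₂) := of (φ := boolPhi φ₁ φ₂) true

abbrev ofRight : G₂ →* PushoutI (boolPhi φ₁ φ₂) := of (φ := boolPhi φ₁ φ₂) false

theorem ofLeft_comp : (ofLeft (φ₂ := φ₂)).comp φ₁ = base (boolPhi φ₁ φ₂) :=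
  of_comp_eq_base true

theorem ofRight_comp : (ofRight (φ₁ := φ₁)).comp φ₂ = base (boolPhi φ₁ φ₂) :=
  of_comp_eq_base false

def lift₂ (f₁ : G₁ →* K) (f₂ : G₂ →* K) (k : H →* K) (h₁ : f₁.comp φ₁ = k)
    (h₂ : f₂.comp φ₂ = k) : PushoutI (boolPhi φ₁ φ₂) →* K :=
  lift (fun | true => f₁ | false => f₂) k (by rintro (_ | _) <;> assumption)

variable {f₁ : G₁ →* K} {f₂ : G₂ →* K} {k : H →* K} {h₁ : f₁.comp φ₁ = k} {h₂ : f₂.comp φ₂ = k}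

@[simp]
theorem lift₂_ofLeft (g : G₁) : lift₂ f₁ f₂ k h₁ h₂ (ofLeft g) = f₁ g :=
  lift_of (φ := boolPhi φ₁ φ₂) (fun | true => f₁ | false => f₂) k _ (i := true) g

@[simp]
theorem lift₂_ofRight (g : G₂) : lift₂ f₁ f₂ k h₁ h₂ (ofRight g) = f₂ g :=
  lift_of (φ := boolPhi φ₁ φ₂) (fun | true => f₁ | false => f₂) k _ (i := false) g

@[simp]
theorem lift₂_base (h : H) : lift₂ f₁ f₂ k h₁ h₂ (base _ h) = k h := lift_base _ _ _ h

theorem hom_ext₂ {f g : PushoutI (boolPhi φ₁ φ₂) →* K}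
    (h₁ : f.comp ofLeft = g.comp ofLeft) (h₂ : f.comp ofRight = g.comp ofRight) : f = g :=
  hom_ext_nonempty (by rintro (_ | _) <;> assumption)

end Binary

variable {A B C : Type} [Group A] [Group B] [Group C]

variable (A B C) in
abbrev prodAmalg : ∀ b, C →* BoolFam (A × C) (C × B) b :=
  boolPhi (MonoidHom.inr A C) (MonoidHom.inl C B)

def ofCoprod : A ∗ B →* PushoutI (prodAmalg A B C) :=
  Coprod.lift (ofLeft.comp (MonoidHom.inl A C)) (ofRight.comp (MonoidHom.inr C B))

theorem ofLeft_mk (a : A) (c : C) :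
    ofLeft (φ₂ := MonoidHom.inl C B) (a, c) = ofCoprod (Coprod.inl a) * base _ c := by
  rw [← ofLeft_comp, ofCoprod, Coprod.lift_apply_inl, MonoidHom.comp_apply, MonoidHom.comp_apply,
    ← map_mul]
  simp

theorem ofRight_mk (c : C) (b : B) :
    ofRight (φ₁ := MonoidHom.inr A C) (c, b) = ofCoprod (Coprod.inr b) * base _ c := by
  rw [← ofRight_comp, ofCoprod, Coprod.lift_apply_inr, MonoidHom.comp_apply, MonoidHom.comp_apply,
    ← map_mul]
  simp

theorem commute_ofCoprod_base (x : A ∗ B) (c : C) :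
    Commute (ofCoprod x) (base (prodAmalg A B C) c) := by
  induction x using Coprod.induction_on with
  | inl a =>
    rw [← ofLeft_comp]
    exact ((Commute.one_right a).prod (Commute.one_left c)).map
      (ofLeft (φ₁ := MonoidHom.inr A C) (φ₂ := MonoidHom.inl C B))
  | inr b =>
    rw [← ofRight_comp]
    exact ((Commute.one_left c).prod (Commute.one_right b)).map
      (ofRight (φ₁ := MonoidHom.inr A C) (φ₂ := MonoidHom.inl C B))
  | mul x y hx hy => rw [map_mul]; exact hx.mul_left hy

def toCoprodProd : PushoutI (prodAmalg A B C) →* (A ∗ B) × C :=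
  lift₂ (MonoidHom.prodMap Coprod.inl (MonoidHom.id C))
    ((Coprod.inr.comp (MonoidHom.snd C B)).prod (MonoidHom.fst C B))
    (MonoidHom.inr (A ∗ B) C) (by ext <;> simp) (by ext <;> simp)

def ofCoprodProd : (A ∗ B) × C →* PushoutI (prodAmalg A B C) :=
  MonoidHom.noncommCoprod ofCoprod (base _) commute_ofCoprod_base

theorem toCoprodProd_comp_ofCoprod :
    toCoprodProd.comp ofCoprod = MonoidHom.inl (A ∗ B) C := by
  refine Coprod.hom_ext ?_ ?_ <;> ext <;> simp [toCoprodProd, ofCoprod]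

theorem toCoprodProd_ofCoprod (x : A ∗ B) : toCoprodProd (ofCoprod x) = (x, (1 : C)) :=
  DFunLike.congr_fun toCoprodProd_comp_ofCoprod x

theorem toCoprodProd_base (c : C) : toCoprodProd (base (prodAmalg A B C) c) = (1, c) :=
  lift₂_base c

def coprodProdEquiv : PushoutI (prodAmalg A B C) ≃* (A ∗ B) × C :=
  MonoidHom.toMulEquiv toCoprodProd ofCoprodProd
    (by
      refine hom_ext₂ ?_ ?_ <;> ext ⟨x, c⟩
      · simp [toCoprodProd, ofCoprodProd, ← ofLeft_mk]
      · simp [toCoprodProd, ofCoprodProd, ← ofRight_mk])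
    (by
      ext ⟨x, c⟩ <;>
      simp [ofCoprodProd, toCoprodProd_ofCoprod, toCoprodProd_base])

end Monoid.PushoutI

namespace FreeGroup

variable {α β : Type*}

def coprodEquivSum : FreeGroup α ∗ FreeGroup β ≃* FreeGroup (α ⊕ β) :=
  MonoidHom.toMulEquiv (Monoid.Coprod.lift (map Sum.inl) (map Sum.inr))
    (lift (Sum.elim (Monoid.Coprod.inl ∘ of) (Monoid.Coprod.inr ∘ of)))
    (by ext <;> simp) (by ext (_ | _) <;> simp)

def coprodMultiplicativeIntEquiv (n : ℕ) :
    FreeGroup (Fin n) ∗ Multiplicative ℤ ≃* FreeGroup (Fin (n + 1)) :=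
  (MulEquiv.coprodCongr (.refl _) (mulEquivIntOfUnique (α := Fin 1)).symm).trans <|
    coprodEquivSum.trans (freeGroupCongr finSumFinEquiv)

end FreeGroup

/-- The amalgamated free product `(F₃ × ℤ) ∗_ℤ (ℤ × ℤ)`, where `ℤ` is included in
`F₃ × ℤ` as the second coordinate `c ↦ (1, c)` and in `ℤ × ℤ` as the first coordinate
`c ↦ (c, 1)`, is isomorphic to `F₄ × ℤ`.  (Here `ℤ` is written multiplicatively as
`Multiplicative ℤ`.)  This is the paper's claim that
`π₁(M) = π₁((Σ × S¹) ∪_{β₀} T₂)` is a free group times `ℤ`. -/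
theorem pushout_free3_int_amalg_int_sq :
    Nonempty
      (Monoid.PushoutI
          (boolPhi
            (MonoidHom.prod (1 : Multiplicative ℤ →* FreeGroup (Fin 3))
              (MonoidHom.id (Multiplicative ℤ)))
            (MonoidHom.prod (MonoidHom.id (Multiplicative ℤ))
              (1 : Multiplicative ℤ →* Multiplicative ℤ))) ≃*
        FreeGroup (Fin 4) × Multiplicative ℤ) :=
  ⟨Monoid.PushoutI.coprodProdEquiv.trans <|
    MulEquiv.prodCongr (FreeGroup.coprodMultiplicativeIntEquiv 3) (.refl _)⟩
end
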